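/- Let u ∈ H^s(ℝ^{2n}; ℝ^{2n}) with s > n + 1 satisfy the symplectic condition ω^T·du = (du)^T·ω. Then the symplectic divergence of the convective term satisfies ∇_ω · [(u·∇)u] = (u·∇)(∇_ω · u); in particular the trace term tr(ω · (du)^T · (du)^T) vanishes. -/

import Mathlib

open MeasureTheory Real Complex Filter Finset Metric Function
open scoped FourierTransform ENNReal Topology NNReal RealInnerProductSpace

noncomputable section

/-- Euclidean space `ℝ^m`. -/
abbrev Euc (m : ℕ) := EuclideanSpace ℝ (Fin m)

/-- The `H^s` Sobolev "norm" (valued in `ℝ≥0∞`), defined via the Fourier transform. -/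
def sobNorm {m : ℕ} (s : ℝ) (f : Euc m → ℂ) : ℝ≥0∞ :=
  (∫⁻ ξ, ENNReal.ofReal ((1 + ‖ξ‖ ^ 2) ^ s) * (‖𝓕 f ξ‖₊ : ℝ≥0∞) ^ 2) ^ (1 / 2 : ℝ)

/-- Sobolev norm of a real-valued function. -/
def sobNormR {m : ℕ} (s : ℝ) (f : Euc m → ℝ) : ℝ≥0∞ :=
  sobNorm s (fun x => (f x : ℂ))

/-- Sobolev norm of a vector field, componentwise. -/
def sobNormV {m : ℕ} (s : ℝ) (u : Euc m → Euc m) : ℝ≥0∞ :=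
  ∑ i : Fin m, sobNormR s (fun x => u x i)

/-- Partial derivative `∂_i f`. -/
def pd {m : ℕ} {F : Type*} [NormedAddCommGroup F] [NormedSpace ℝ F]
    (i : Fin m) (f : Euc m → F) (x : Euc m) : F :=
  fderiv ℝ f x (EuclideanSpace.single i 1)
open Matrix

/-- The standard symplectic matrix on `ℝ^{2n}`: block diagonal with blocks `[[0,1],[-1,0]]`. -/
def ωmat (n : ℕ) : Matrix (Fin (2 * n)) (Fin (2 * n)) ℝ := fun i j =>
  if i.val % 2 = 0 ∧ j.val = i.val + 1 then 1
  else if j.val % 2 = 0 ∧ i.val = j.val + 1 then -1 else 0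

/-- The Jacobian matrix `Du(x) = (∂_j u_i(x))`. -/
def jac {n : ℕ} (u : Euc (2 * n) → Euc (2 * n)) (x : Euc (2 * n)) :
    Matrix (Fin (2 * n)) (Fin (2 * n)) ℝ := fun i j =>
  pd j (fun y => u y i) x

/-- `u` is a symplectic vector field: `P(u) = ωᵀ·Du − (Du)ᵀ·ω = 0`
(the coordinate form of `L_u ω = 0`). -/
def IsSymp (n : ℕ) (u : Euc (2 * n) → Euc (2 * n)) : Prop :=
  ∀ x, (ωmat n)ᵀ * jac u x = (jac u x)ᵀ * ωmat n

/-- The symplectic divergence `∇_ω·u = ∂₂u₁ − ∂₁u₂ + … + ∂_{2n}u_{2n−1} − ∂_{2n−1}u_{2n}`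
(written here with 0-based indices). -/
def sympDiv (n : ℕ) (u : Euc (2 * n) → Euc (2 * n)) (x : Euc (2 * n)) : ℝ :=
  ∑ i : Fin n,
    (pd ⟨2 * i.val + 1, by have := i.isLt; omega⟩
        (fun y => u y ⟨2 * i.val, by have := i.isLt; omega⟩) x
      - pd ⟨2 * i.val, by have := i.isLt; omega⟩
        (fun y => u y ⟨2 * i.val + 1, by have := i.isLt; omega⟩) x)

/-- The symplectic gradient `∇_ω H = (∂₂H, −∂₁H, …, ∂_{2n}H, −∂_{2n−1}H)`. -/
def sympGrad (n : ℕ) (H : Euc (2 * n) → ℝ) (x : Euc (2 * n)) : Euc (2 * n) :=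
  (EuclideanSpace.equiv (Fin (2 * n)) ℝ).symm fun j =>
    if h : j.val % 2 = 0 then pd ⟨j.val + 1, by have := j.isLt; omega⟩ H x
    else -pd ⟨j.val - 1, by have := j.isLt; omega⟩ H x

/-- The convective term `(u·∇)u`, with components `Σ_k u_k ∂_k u_j`. -/
def convect {n : ℕ} (u : Euc (2 * n) → Euc (2 * n)) (x : Euc (2 * n)) : Euc (2 * n) :=
  (EuclideanSpace.equiv (Fin (2 * n)) ℝ).symm fun j =>
    ∑ k : Fin (2 * n), u x k * pd k (fun y => u y j) x

/-! The symplectic divergence is `v ↦ tr(ω (Dv)ᵀ)`. For any constant matrix `Ω`, expanding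
`∂_k (Σ_l u_l ∂_l u_i)` by the product rule and commuting second derivatives gives
`tr(Ω (D[(u·∇)u])ᵀ) = tr(Ω (Du)ᵀ (Du)ᵀ) + (u·∇) tr(Ω (Du)ᵀ)`.
For `Ω = ω` the first term vanishes: by cyclicity and the symplectic condition
`(Du)ᵀ ω = ωᵀ Du`, it equals `tr(ωᵀ Du (Du)ᵀ)`, the trace of a skew matrix times a
symmetric one. -/

theorem Fin.sum_univ_two_mul {M : Type*} [AddCommMonoid M] (n : ℕ) (f : Fin (2 * n) → M) :
    ∑ i, f i = ∑ p : Fin n, (f ⟨2 * p, by omega⟩ + f ⟨2 * p + 1, by omega⟩) := by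
  rw [← Fintype.sum_equiv (finProdFinEquiv.trans (finCongr (Nat.mul_comm n 2))) _ f
    fun _ => rfl, Fintype.sum_prod_type]
  refine Finset.sum_congr rfl fun p _ => ?_
  rw [Fin.sum_univ_two]
  congr 2 <;> ext <;> simp [finProdFinEquiv_apply_val, Nat.mul_comm, Nat.add_comm]

theorem Matrix.trace_mul_transpose_mul_transpose_eq_zero {m R : Type*} [Fintype m] [CommRing R]
    [IsAddTorsionFree R] {J M : Matrix m m R} (hJ : Jᵀ = -J) (hM : Jᵀ * M = Mᵀ * J) :
    trace (J * Mᵀ * Mᵀ) = 0 := by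
  have hskew : trace (Jᵀ * (M * Mᵀ)) = -trace (Jᵀ * (M * Mᵀ)) :=
    calc trace (Jᵀ * (M * Mᵀ)) = trace ((Jᵀ * (M * Mᵀ))ᵀ) := (trace_transpose _).symm
      _ = trace (J * (M * Mᵀ)) := by
        rw [transpose_mul, transpose_mul, transpose_transpose, transpose_transpose,
          trace_mul_comm]
      _ = -trace (Jᵀ * (M * Mᵀ)) := by rw [hJ, Matrix.neg_mul, trace_neg, neg_neg]
  calc trace (J * Mᵀ * Mᵀ) = trace (Mᵀ * J * Mᵀ) := trace_mul_cycle _ _ _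
    _ = trace (Jᵀ * (M * Mᵀ)) := by rw [← hM, Matrix.mul_assoc]
    _ = 0 := self_eq_neg.mp hskew

theorem ωmat_transpose (n : ℕ) : (ωmat n)ᵀ = -ωmat n := by
  ext i j
  rw [transpose_apply, neg_apply, ωmat, ωmat]
  split_ifs <;> first | omega | norm_num

theorem ωmat_mul_apply_even (n : ℕ) (B : Matrix (Fin (2 * n)) (Fin (2 * n)) ℝ) (p : Fin n)
    (j : Fin (2 * n)) : (ωmat n * B) ⟨2 * p, by omega⟩ j = B ⟨2 * p + 1, by omega⟩ j := by
  have hrow : ωmat n ⟨2 * p, by omega⟩ = Pi.single ⟨2 * p + 1, by omega⟩ 1 := by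
    ext k
    simp only [ωmat, Pi.single_apply, Fin.ext_iff]
    split_ifs <;> first | omega | norm_num
  simp [mul_apply, hrow, Pi.single_apply]

theorem ωmat_mul_apply_odd (n : ℕ) (B : Matrix (Fin (2 * n)) (Fin (2 * n)) ℝ) (p : Fin n)
    (j : Fin (2 * n)) : (ωmat n * B) ⟨2 * p + 1, by omega⟩ j = -B ⟨2 * p, by omega⟩ j := by
  have hrow : ωmat n ⟨2 * p + 1, by omega⟩ = -Pi.single ⟨2 * p, by omega⟩ 1 := by
    ext k
    simp only [ωmat, Pi.neg_apply, Pi.single_apply, Fin.ext_iff]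
    split_ifs <;> first | omega | norm_num
  simp [mul_apply, hrow, Pi.single_apply]

theorem trace_ωmat_mul (n : ℕ) (B : Matrix (Fin (2 * n)) (Fin (2 * n)) ℝ) :
    trace (ωmat n * B) = ∑ p : Fin n,
      (B ⟨2 * p + 1, by omega⟩ ⟨2 * p, by omega⟩
        - B ⟨2 * p, by omega⟩ ⟨2 * p + 1, by omega⟩) := by
  rw [trace, Fin.sum_univ_two_mul]
  refine Finset.sum_congr rfl fun p _ => ?_
  rw [Matrix.diag_apply, Matrix.diag_apply, ωmat_mul_apply_even, ωmat_mul_apply_odd,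
    sub_eq_neg_add, add_comm]

theorem sympDiv_eq_trace (n : ℕ) (v : Euc (2 * n) → Euc (2 * n)) (x : Euc (2 * n)) :
    sympDiv n v x = trace (ωmat n * (jac v x)ᵀ) := by
  rw [trace_ωmat_mul]
  rfl

section PartialDerivatives

variable {m : ℕ}

theorem pd_mul {f g : Euc m → ℝ} {x : Euc m} (hf : DifferentiableAt ℝ f x)
    (hg : DifferentiableAt ℝ g x) (i : Fin m) :
    pd i (fun y => f y * g y) x = pd i f x * g x + f x * pd i g x := by
  simp only [pd, fderiv_fun_mul hf hg, _root_.add_apply, _root_.smul_apply, smul_eq_mul]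
  ring

theorem pd_const_mul {f : Euc m → ℝ} {x : Euc m} (hf : DifferentiableAt ℝ f x) (c : ℝ)
    (i : Fin m) : pd i (fun y => c * f y) x = c * pd i f x := by
  simp only [pd, fderiv_const_mul hf, _root_.smul_apply, smul_eq_mul]

theorem pd_sum {ι : Type*} {t : Finset ι} {f : ι → Euc m → ℝ} {x : Euc m}
    (hf : ∀ j ∈ t, DifferentiableAt ℝ (f j) x) (i : Fin m) :
    pd i (fun y => ∑ j ∈ t, f j y) x = ∑ j ∈ t, pd i (f j) x := by
  simp only [pd, fderiv_fun_sum hf, _root_.sum_apply]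

theorem ContDiff.pd {k : WithTop ℕ∞} {f : Euc m → ℝ} (hf : ContDiff ℝ (k + 1) f)
    (i : Fin m) :
    ContDiff ℝ k (pd i f) :=
  (hf.fderiv_right le_rfl).clm_apply contDiff_const

theorem pd_comm {f : Euc m → ℝ} (hf : ContDiff ℝ 2 f) (i j : Fin m) (x : Euc m) :
    pd i (pd j f) x = pd j (pd i f) x := by
  have hsecond : ∀ a b : Fin m, pd a (pd b f) x =
      fderiv ℝ (fderiv ℝ f) x (EuclideanSpace.single a 1) (EuclideanSpace.single b 1) := by
    intro a b
    have hd : DifferentiableAt ℝ (fderiv ℝ f) x :=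
      ((hf.fderiv_right (m := 1) le_rfl).differentiable one_ne_zero) x
    change fderiv ℝ (fun y => fderiv ℝ f y (EuclideanSpace.single b 1)) x _ = _
    rw [fderiv_clm_apply hd (differentiableAt_const _)]
    simp
  rw [hsecond, hsecond, (hf.contDiffAt.isSymmSndFDerivAt (by simp))]

end PartialDerivatives

section Convection

variable {n : ℕ} {u : Euc (2 * n) → Euc (2 * n)}

theorem jac_convect_apply (hu : ContDiff ℝ 2 u) (x : Euc (2 * n)) (i k : Fin (2 * n)) :
    jac (convect u) x i k = ∑ l, (pd k (fun y => u y l) x * pd l (fun y => u y i) x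
      + u x l * pd l (pd k (fun y => u y i)) x) := by
  have hcomp : ∀ i, ContDiff ℝ 2 (fun y => u y i) := contDiff_euclidean.mp hu
  have hdiff l : DifferentiableAt ℝ (fun y => u y l) x :=
    (hcomp l).differentiable two_ne_zero x
  have hdiff_pd l : DifferentiableAt ℝ (pd l (fun y => u y i)) x :=
    ((hcomp i).pd l).differentiable one_ne_zero x
  change pd k (fun y => ∑ l, u y l * pd l (fun z => u z i) y) x = _
  refine (pd_sum (f := fun l y => u y l * pd l (fun z => u z i) y)
    (fun l _ => (hdiff l).mul (hdiff_pd l)) k).trans ?_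
  refine Finset.sum_congr rfl fun l _ => ?_
  rw [pd_mul (hdiff l) (hdiff_pd l), pd_comm (hcomp i)]

theorem pd_trace_mul_transpose_jac (Ω : Matrix (Fin (2 * n)) (Fin (2 * n)) ℝ)
    (hu : ContDiff ℝ 2 u) (x : Euc (2 * n)) (l : Fin (2 * n)) :
    pd l (fun y => trace (Ω * (jac u y)ᵀ)) x
      = ∑ i, ∑ k, Ω i k * pd l (pd k (fun y => u y i)) x := by
  have hdiff_pd k i : DifferentiableAt ℝ (pd k (fun y => u y i)) x :=
    ((contDiff_euclidean.mp hu i).pd k).differentiable one_ne_zero x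
  change pd l (fun y => ∑ i, ∑ k, Ω i k * pd k (fun z => u z i) y) x = _
  refine (pd_sum (f := fun i y => ∑ k, Ω i k * pd k (fun z => u z i) y)
    (fun i _ => DifferentiableAt.fun_sum fun k _ => (hdiff_pd k i).const_mul _) l).trans ?_
  refine Finset.sum_congr rfl fun i _ => ?_
  refine (pd_sum (f := fun k y => Ω i k * pd k (fun z => u z i) y)
    (fun k _ => (hdiff_pd k i).const_mul _) l).trans ?_
  exact Finset.sum_congr rfl fun k _ => pd_const_mul (hdiff_pd k i) _ l

theorem trace_mul_transpose_jac_convect (Ω : Matrix (Fin (2 * n)) (Fin (2 * n)) ℝ)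
    (hu : ContDiff ℝ 2 u) (x : Euc (2 * n)) :
    trace (Ω * (jac (convect u) x)ᵀ) = trace (Ω * (jac u x)ᵀ * (jac u x)ᵀ)
      + ∑ l, u x l * pd l (fun y => trace (Ω * (jac u y)ᵀ)) x := by
  simp only [pd_trace_mul_transpose_jac Ω hu x]
  simp only [trace, Matrix.diag_apply, mul_apply, transpose_apply, jac_convect_apply hu x,
    mul_add, Finset.sum_add_distrib, Finset.mul_sum, Finset.sum_mul]
  congr 1
  · refine Finset.sum_congr rfl fun i _ => Finset.sum_comm.trans ?_
    refine Finset.sum_congr rfl fun j _ => Finset.sum_congr rfl fun k _ => ?_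
    rw [mul_assoc]
    rfl
  · refine (Finset.sum_congr rfl fun i _ => Finset.sum_comm).trans Finset.sum_comm |>.trans ?_
    refine Finset.sum_congr rfl fun l _ => Finset.sum_congr rfl fun i _ =>
      Finset.sum_congr rfl fun k _ => ?_
    ring

end Convection

theorem stmt8_general (n : ℕ)
    (u : Euc (2 * n) → Euc (2 * n))
    (hreg : ContDiff ℝ 2 u) (hsymp : IsSymp n u) :
    ∀ x, sympDiv n (fun y => convect u y) x
          = (∑ k : Fin (2 * n), u x k * pd k (fun y => sympDiv n u y) x)
        ∧ Matrix.trace (ωmat n * (jac u x)ᵀ * (jac u x)ᵀ) = 0 := by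
  intro x
  have htrace : trace (ωmat n * (jac u x)ᵀ * (jac u x)ᵀ) = 0 :=
    trace_mul_transpose_mul_transpose_eq_zero (ωmat_transpose n) (hsymp x)
  refine ⟨?_, htrace⟩
  simp only [sympDiv_eq_trace]
  rw [trace_mul_transpose_jac_convect _ hreg, htrace, zero_add]

/-- For a symplectic vector field `u ∈ H^s`, `s > n+1`:
`∇_ω·[(u·∇)u] = (u·∇)(∇_ω·u)`, and the trace term `tr(ω·(du)ᵀ·(du)ᵀ)` vanishes. -/
theorem stmt8 (n : ℕ) (hn : 1 ≤ n) (s : ℝ) (hs : s > n + 1)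
    (u : Euc (2 * n) → Euc (2 * n))
    (hreg : ContDiff ℝ 2 u) (hsob : sobNormV s u ≠ ∞) (hsymp : IsSymp n u) :
    ∀ x, sympDiv n (fun y => convect u y) x
          = (∑ k : Fin (2 * n), u x k * pd k (fun y => sympDiv n u y) x)
        ∧ Matrix.trace (ωmat n * (jac u x)ᵀ * (jac u x)ᵀ) = 0 :=
  stmt8_general n u hreg hsymp
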